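/- arXiv:1410.2931 — 4 statements merged into one kernel-verified Lean document; each statement's English description precedes it below -/
import Mathlib

section
/- Consider the VF-OLC problem: minimize Σ_{i∈N} [c_i(d_i) + D_i ω_i²/2] over (d,ω,φ,P) ∈ ℝ^N×ℝ^N×ℝ^N×ℝ^E subject to P^in − (d + Dω) = CP, P^in − d = L_B φ, Ĉ B Cᵀ φ = P̂, and P̲ ≤ B Cᵀ φ ≤ P̄, with Lagrangian L(d,ω,φ,P;λ,ν,π,ρ⁺,ρ⁻) = Σ_i [c_i(d_i) + D_i ω_i²/2] + νᵀ(P^in − (d + Dω) − CP) + λᵀ(P^in − d − L_B φ) + πᵀ(Ĉ B Cᵀ φ − P̂) + (ρ⁺)ᵀ(B Cᵀ φ − P̄) + (ρ⁻)ᵀ(P̲ − B Cᵀ φ). Then a point (d*,ω*,φ*,P*;λ*,ν*,π*,ρ⁺*,ρ⁻*) with ρ⁺*, ρ⁻* ≥ 0 componentwise is a saddle point of L (L is minimized over all primal variables (d,ω,φ,P) and maximized over all multipliers (λ,ν,π,ρ⁺,ρ⁻) with ρ⁺,ρ⁻ ≥ 0) if and only if all of the following hold: (i) (d*,ω*,φ*,P*)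 is feasible for VF-OLC; (ii) ρ⁺*, ρ⁻* ≥ 0; (iii) for every bus i, ω_i* = ν_i* and d_i* = (c_i')⁻¹(ν_i* + λ_i*), and ν* = ν̂·1 for some scalar ν̂; (iv) for every bus i, Σ_{j∈N_i} B_{ij}(λ_j* − λ_i*) + (C B (Ĉᵀ π* + ρ⁺* − ρ⁻*))_i = 0; (v) for every line e, ρ_e⁺*·((B Cᵀ φ*)_e − P̄_e) = 0 and ρ_e⁻*·(P̲_e − (B Cᵀ φ*)_e) = 0. Moreover, the components d*, ω*, ν*, λ* are the same for every such saddle point, and ω* = ν* = 0 (i.e. ν̂ = 0). -/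
open Matrix BigOperators

noncomputable section

variable {N E K : Type*}

/-- Incidence matrix of a directed graph whose edge `e` goes from `src e` to `tgt e`. -/
def inc [DecidableEq N] (src tgt : E → N) : Matrix N E ℝ :=
  Matrix.of fun i e => if src e = i then (1 : ℝ) else if tgt e = i then -1 else 0

/-- The vector of line flows `B Cᵀ φ`. -/
def BCt (src tgt : E → N) (B : E → ℝ) (φ : N → ℝ) : E → ℝ :=
  fun e => B e * (φ (src e) - φ (tgt e))

variable [Fintype N] [Fintype E] [Fintype K] [DecidableEq N]

/-- The VF-OLC Lagrangian
`L(d,ω,φ,P;λ,ν,π,ρ⁺,ρ⁻) = Σ_i [c_i(d_i) + D_i ω_i²/2] + νᵀ(P^in − (d + Dω) − CP)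
 + λᵀ(P^in − d − L_B φ) + πᵀ(Ĉ B Cᵀ φ − P̂) + (ρ⁺)ᵀ(B Cᵀ φ − P̄) + (ρ⁻)ᵀ(P̲ − B Cᵀ φ)`. -/
def Lag (src tgt : E → N) (B : E → ℝ) (D : N → ℝ) (Chat : Matrix K E ℝ)
    (Pin : N → ℝ) (Phat : K → ℝ) (Plo Phi : E → ℝ) (c : N → ℝ → ℝ)
    (d ω φ : N → ℝ) (P : E → ℝ) (lam nu : N → ℝ) (pi' : K → ℝ) (rp rm : E → ℝ) : ℝ :=
  (∑ i, (c i (d i) + D i * ω i ^ 2 / 2))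
    + nu ⬝ᵥ (fun i => Pin i - (d i + D i * ω i) - (inc src tgt).mulVec P i)
    + lam ⬝ᵥ (fun i => Pin i - d i - (inc src tgt).mulVec (BCt src tgt B φ) i)
    + pi' ⬝ᵥ (fun k => Chat.mulVec (BCt src tgt B φ) k - Phat k)
    + rp ⬝ᵥ (fun e => BCt src tgt B φ e - Phi e)
    + rm ⬝ᵥ (fun e => Plo e - BCt src tgt B φ e)

/-- Primal feasibility for VF-OLC: `P^in − (d + Dω) = CP`, `P^in − d = L_B φ`,
`Ĉ B Cᵀ φ = P̂`, `P̲ ≤ B Cᵀ φ ≤ P̄`. -/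
def Feas (src tgt : E → N) (B : E → ℝ) (D : N → ℝ) (Chat : Matrix K E ℝ)
    (Pin : N → ℝ) (Phat : K → ℝ) (Plo Phi : E → ℝ)
    (d ω φ : N → ℝ) (P : E → ℝ) : Prop :=
  (∀ i, Pin i - (d i + D i * ω i) = (inc src tgt).mulVec P i) ∧
  (∀ i, Pin i - d i = (inc src tgt).mulVec (BCt src tgt B φ) i) ∧
  (∀ k, Chat.mulVec (BCt src tgt B φ) k = Phat k) ∧
  (∀ e, Plo e ≤ BCt src tgt B φ e ∧ BCt src tgt B φ e ≤ Phi e)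

/-- `(d,ω,φ,P;λ,ν,π,ρ⁺,ρ⁻)` with `ρ⁺,ρ⁻ ≥ 0` is a saddle point of the Lagrangian: `L` is
minimized over all primal variables and maximized over all multipliers with `ρ⁺,ρ⁻ ≥ 0`. -/
def Saddle (src tgt : E → N) (B : E → ℝ) (D : N → ℝ) (Chat : Matrix K E ℝ)
    (Pin : N → ℝ) (Phat : K → ℝ) (Plo Phi : E → ℝ) (c : N → ℝ → ℝ)
    (d ω φ : N → ℝ) (P : E → ℝ) (lam nu : N → ℝ) (pi' : K → ℝ) (rp rm : E → ℝ) : Prop :=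
  (∀ e, 0 ≤ rp e) ∧ (∀ e, 0 ≤ rm e) ∧
  (∀ d' ω' φ' : N → ℝ, ∀ P' : E → ℝ,
      Lag src tgt B D Chat Pin Phat Plo Phi c d ω φ P lam nu pi' rp rm ≤
      Lag src tgt B D Chat Pin Phat Plo Phi c d' ω' φ' P' lam nu pi' rp rm) ∧
  (∀ lam' nu' : N → ℝ, ∀ pi'' : K → ℝ, ∀ rp' rm' : E → ℝ,
      (∀ e, 0 ≤ rp' e) → (∀ e, 0 ≤ rm' e) →
      Lag src tgt B D Chat Pin Phat Plo Phi c d ω φ P lam' nu' pi'' rp' rm' ≤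
      Lag src tgt B D Chat Pin Phat Plo Phi c d ω φ P lam nu pi' rp rm)

/-- The KKT conditions (i)–(v) of STATEMENT 0 (with `d_i = (c_i')⁻¹(ν_i+λ_i)` written
equivalently as `c_i'(d_i) = ν_i + λ_i`). -/
def KKT (src tgt : E → N) (B : E → ℝ) (D : N → ℝ) (Chat : Matrix K E ℝ)
    (Pin : N → ℝ) (Phat : K → ℝ) (Plo Phi : E → ℝ) (c' : N → ℝ → ℝ)
    (d ω φ : N → ℝ) (P : E → ℝ) (lam nu : N → ℝ) (pi' : K → ℝ) (rp rm : E → ℝ) : Prop :=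
  Feas src tgt B D Chat Pin Phat Plo Phi d ω φ P ∧
  (∀ e, 0 ≤ rp e ∧ 0 ≤ rm e) ∧
  (∀ i, ω i = nu i) ∧
  (∀ i, c' i (d i) = nu i + lam i) ∧
  (∃ nuhat : ℝ, ∀ i, nu i = nuhat) ∧
  (∀ i, -((inc src tgt).mulVec (BCt src tgt B lam) i)
      + (inc src tgt).mulVec
          (fun e => B e * ((Chat.transpose).mulVec pi' e + rp e - rm e)) i = 0) ∧
  (∀ e, rp e * (BCt src tgt B φ e - Phi e) = 0 ∧ rm e * (Plo e - BCt src tgt B φ e) = 0)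


section MyHelpers
variable {N E K : Type*} [Fintype N] [Fintype E] [Fintype K] [DecidableEq N]
set_option linter.unusedSectionVars false

lemma dot_inc (src tgt : E → N) (hne : ∀ e, src e ≠ tgt e) (v : N → ℝ) (w : E → ℝ) :
    ∑ i, v i * (inc src tgt).mulVec w i = ∑ e, (v (src e) - v (tgt e)) * w e := by
  unfold inc Matrix.mulVec dotProduct
  simp only [Matrix.of_apply, Finset.mul_sum]
  rw [Finset.sum_comm]
  refine Finset.sum_congr rfl fun e _ => ?_
  have h : ∀ i, v i * ((if src e = i then (1:ℝ) else if tgt e = i then -1 else 0) * w e)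
      = (if src e = i then v i * w e else 0) - (if tgt e = i then v i * w e else 0) := by
    intro i
    by_cases h1 : src e = i
    · have h2 : tgt e ≠ i := fun h => hne e (h1.trans h.symm)
      simp [h1, h2]
    · by_cases h2 : tgt e = i
      · simp [h1, h2]
      · simp [h1, h2]
  simp only [h, Finset.sum_sub_distrib, Finset.sum_ite_eq, Finset.mem_univ, if_true]
  ring

lemma dot_split {ι : Type*} [Fintype ι] (u v r : ι → ℝ) :
    u ⬝ᵥ r = v ⬝ᵥ r + ∑ i, (u i - v i) * r i := by
  unfold dotProduct
  rw [← Finset.sum_add_distrib]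
  exact Finset.sum_congr rfl fun i _ => by ring

lemma sum_update_diff {ι : Type*} [Fintype ι] [DecidableEq ι] (F : ι → ℝ → ℝ)
    (f : ι → ℝ) (i : ι) (b : ℝ) :
    ∑ j, F j (Function.update f i b j) = (∑ j, F j (f j)) + (F i b - F i (f i)) := by
  have h : ∑ j, (F j (Function.update f i b j) - F j (f j)) = F i b - F i (f i) := by
    rw [Finset.sum_eq_single_of_mem i (Finset.mem_univ i)]
    · rw [Function.update_self]
    · intro j _ hj; rw [Function.update_of_ne hj]; ring
  have h2 := Finset.sum_sub_distrib (s := (Finset.univ : Finset ι))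
    (f := fun j => F j (Function.update f i b j)) (g := fun j => F j (f j))
  rw [h] at h2; linarith

def Mvec (src tgt : E → N) (B : E → ℝ) (Chat : Matrix K E ℝ) (lam : N → ℝ)
    (pi' : K → ℝ) (rp rm : E → ℝ) : N → ℝ :=
  fun i => -((inc src tgt).mulVec (BCt src tgt B lam) i)
      + (inc src tgt).mulVec
          (fun e => B e * ((Chat.transpose).mulVec pi' e + rp e - rm e)) i

lemma mulVec_pt_sub {m n : Type*} [Fintype n] (M : Matrix m n ℝ) (w1 w2 : n → ℝ) (i : m) :
    M.mulVec (fun e => w1 e - w2 e) i = M.mulVec w1 i - M.mulVec w2 i := by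
  unfold Matrix.mulVec dotProduct
  rw [← Finset.sum_sub_distrib]
  exact Finset.sum_congr rfl fun e _ => by ring

lemma sum_Mvec (src tgt : E → N) (hne : ∀ e, src e ≠ tgt e) (B : E → ℝ)
    (Chat : Matrix K E ℝ) (lam : N → ℝ) (pi' : K → ℝ) (rp rm : E → ℝ) (ψ : N → ℝ) :
    ∑ i, Mvec src tgt B Chat lam pi' rp rm i * ψ i
      = ∑ e, (Chat.transpose.mulVec pi' e + rp e - rm e - (lam (src e) - lam (tgt e)))
          * (B e * (ψ (src e) - ψ (tgt e))) := by
  set w : E → ℝ := fun e =>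
    B e * (Chat.transpose.mulVec pi' e + rp e - rm e - (lam (src e) - lam (tgt e))) with hwdef
  have hw : ∀ i, Mvec src tgt B Chat lam pi' rp rm i = (inc src tgt).mulVec w i := by
    intro i
    have : w = fun e => (fun e => B e * ((Chat.transpose).mulVec pi' e + rp e - rm e)) e
        - BCt src tgt B lam e := by
      funext e; simp only [hwdef, BCt]; ring
    rw [this, mulVec_pt_sub]
    unfold Mvec; ring
  calc ∑ i, Mvec src tgt B Chat lam pi' rp rm i * ψ i
      = ∑ i, ψ i * (inc src tgt).mulVec w i :=
        Finset.sum_congr rfl fun i _ => by rw [hw]; ring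
    _ = ∑ e, (ψ (src e) - ψ (tgt e)) * w e := dot_inc src tgt hne ψ w
    _ = _ := Finset.sum_congr rfl fun e _ => by simp only [hwdef]; ring

end MyHelpers

lemma strictmono_of_c'' (c' c'' : ℝ → ℝ) (hc'' : ∀ x, HasDerivAt c' (c'' x) x)
    {α : ℝ} (hα : 0 < α) (hs : ∀ x, α ≤ c'' x) : StrictMono c' :=
  strictMono_of_deriv_pos fun x => by
    rw [(hc'' x).deriv]; exact lt_of_lt_of_le hα (hs x)

lemma conv_min (c c' c'' : ℝ → ℝ) (hc' : ∀ x, HasDerivAt c (c' x) x)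
    (hc'' : ∀ x, HasDerivAt c' (c'' x) x) {α : ℝ} (hα : 0 < α) (hs : ∀ x, α ≤ c'' x)
    {k x0 : ℝ} (hk : c' x0 = k) (s : ℝ) : c x0 - k * x0 ≤ c s - k * s := by
  have hmono : StrictMono c' := strictmono_of_c'' c' c'' hc'' hα hs
  have hfd : ∀ x : ℝ, HasDerivAt (fun t => c t - k * t) (c' x - k) x := by
    intro x
    have h1 : HasDerivAt (fun t : ℝ => k * t) k x := by
      simpa using (hasDerivAt_id x).const_mul k
    exact (hc' x).sub h1
  rcases lt_trichotomy s x0 with h | h | h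
  · obtain ⟨ξ, hξ, hsl⟩ := exists_hasDerivAt_eq_slope (fun t => c t - k * t)
      (fun x => c' x - k) h (fun x _ => (hfd x).continuousAt.continuousWithinAt)
      (fun x hx => hfd x)
    have hlt : c' ξ < k := hk ▸ hmono hξ.2
    have hpos : 0 < x0 - s := by linarith
    have hdiv : (c x0 - k * x0 - (c s - k * s)) / (x0 - s) < 0 := by rw [← hsl]; linarith
    rcases div_neg_iff.mp hdiv with ⟨_, h2⟩ | ⟨h1, _⟩ <;> linarith
  · rw [h]
  · obtain ⟨ξ, hξ, hsl⟩ := exists_hasDerivAt_eq_slope (fun t => c t - k * t)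
      (fun x => c' x - k) h (fun x _ => (hfd x).continuousAt.continuousWithinAt)
      (fun x hx => hfd x)
    have hlt : k < c' ξ := hk ▸ hmono hξ.1
    have hpos : 0 < s - x0 := by linarith
    have hdiv : 0 < (c s - k * s - (c x0 - k * x0)) / (s - x0) := by rw [← hsl]; linarith
    rcases div_pos_iff.mp hdiv with ⟨h1, _⟩ | ⟨_, h2⟩ <;> linarith

lemma stationary_of_min (c c' : ℝ → ℝ) (hc' : ∀ x, HasDerivAt c (c' x) x) (k x0 : ℝ)
    (h : ∀ s, c x0 - k * x0 ≤ c s - k * s) : c' x0 = k := by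
  have hfd : HasDerivAt (fun t => c t - k * t) (c' x0 - k) x0 := by
    have h1 : HasDerivAt (fun t : ℝ => k * t) k x0 := by
      simpa using (hasDerivAt_id x0).const_mul k
    exact (hc' x0).sub h1
  have hmin : IsLocalMin (fun t => c t - k * t) x0 := Filter.Eventually.of_forall h
  have := hmin.hasDerivAt_eq_zero hfd
  linarith

section LagDiff
variable {N E K : Type*} [Fintype N] [Fintype E] [Fintype K] [DecidableEq N]
variable (src tgt : E → N) (B : E → ℝ) (D : N → ℝ) (Chat : Matrix K E ℝ)
  (Pin : N → ℝ) (Phat : K → ℝ) (Plo Phi : E → ℝ) (c : N → ℝ → ℝ)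

set_option linter.unusedSectionVars false

lemma Lag_d_diff (d d' ω φ : N → ℝ) (P : E → ℝ) (lam nu : N → ℝ) (pi' : K → ℝ)
    (rp rm : E → ℝ) :
    Lag src tgt B D Chat Pin Phat Plo Phi c d' ω φ P lam nu pi' rp rm
      = Lag src tgt B D Chat Pin Phat Plo Phi c d ω φ P lam nu pi' rp rm
        + ∑ i, ((c i (d' i) - (nu i + lam i) * d' i) - (c i (d i) - (nu i + lam i) * d i)) := by
  have h1 : ∑ i, (c i (d' i) + D i * ω i ^ 2 / 2)
      = (∑ i, (c i (d i) + D i * ω i ^ 2 / 2)) + ∑ i, (c i (d' i) - c i (d i)) := by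
    rw [← Finset.sum_add_distrib]; exact Finset.sum_congr rfl fun i _ => by ring
  have h2 : nu ⬝ᵥ (fun i => Pin i - (d' i + D i * ω i) - (inc src tgt).mulVec P i)
      = nu ⬝ᵥ (fun i => Pin i - (d i + D i * ω i) - (inc src tgt).mulVec P i)
        - ∑ i, nu i * (d' i - d i) := by
    unfold dotProduct
    rw [← Finset.sum_sub_distrib]; exact Finset.sum_congr rfl fun i _ => by ring
  have h3 : lam ⬝ᵥ (fun i => Pin i - d' i - (inc src tgt).mulVec (BCt src tgt B φ) i)
      = lam ⬝ᵥ (fun i => Pin i - d i - (inc src tgt).mulVec (BCt src tgt B φ) i)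
        - ∑ i, lam i * (d' i - d i) := by
    unfold dotProduct
    rw [← Finset.sum_sub_distrib]; exact Finset.sum_congr rfl fun i _ => by ring
  have h4 : ∑ i, ((c i (d' i) - (nu i + lam i) * d' i) - (c i (d i) - (nu i + lam i) * d i))
      = (∑ i, (c i (d' i) - c i (d i))) - (∑ i, nu i * (d' i - d i))
        - ∑ i, lam i * (d' i - d i) := by
    rw [← Finset.sum_sub_distrib, ← Finset.sum_sub_distrib]
    exact Finset.sum_congr rfl fun i _ => by ring
  unfold Lag
  rw [h1, h2, h3, h4]; ring

lemma Lag_omega_diff (d ω ω' φ : N → ℝ) (P : E → ℝ) (lam nu : N → ℝ) (pi' : K → ℝ)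
    (rp rm : E → ℝ) :
    Lag src tgt B D Chat Pin Phat Plo Phi c d ω' φ P lam nu pi' rp rm
      = Lag src tgt B D Chat Pin Phat Plo Phi c d ω φ P lam nu pi' rp rm
        + ∑ i, (D i / 2 * (ω' i - nu i) ^ 2 - D i / 2 * (ω i - nu i) ^ 2) := by
  have h1 : ∑ i, (c i (d i) + D i * ω' i ^ 2 / 2)
      = (∑ i, (c i (d i) + D i * ω i ^ 2 / 2))
        + ∑ i, (D i * ω' i ^ 2 / 2 - D i * ω i ^ 2 / 2) := by
    rw [← Finset.sum_add_distrib]; exact Finset.sum_congr rfl fun i _ => by ring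
  have h2 : nu ⬝ᵥ (fun i => Pin i - (d i + D i * ω' i) - (inc src tgt).mulVec P i)
      = nu ⬝ᵥ (fun i => Pin i - (d i + D i * ω i) - (inc src tgt).mulVec P i)
        - ∑ i, nu i * (D i * ω' i - D i * ω i) := by
    unfold dotProduct
    rw [← Finset.sum_sub_distrib]; exact Finset.sum_congr rfl fun i _ => by ring
  have h4 : ∑ i, (D i / 2 * (ω' i - nu i) ^ 2 - D i / 2 * (ω i - nu i) ^ 2)
      = (∑ i, (D i * ω' i ^ 2 / 2 - D i * ω i ^ 2 / 2))
        - ∑ i, nu i * (D i * ω' i - D i * ω i) := by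
    rw [← Finset.sum_sub_distrib]
    exact Finset.sum_congr rfl fun i _ => by ring
  unfold Lag
  rw [h1, h2, h4]; ring

lemma Lag_P_diff (hne : ∀ e, src e ≠ tgt e) (d ω φ : N → ℝ) (P P' : E → ℝ)
    (lam nu : N → ℝ) (pi' : K → ℝ) (rp rm : E → ℝ) :
    Lag src tgt B D Chat Pin Phat Plo Phi c d ω φ P' lam nu pi' rp rm
      = Lag src tgt B D Chat Pin Phat Plo Phi c d ω φ P lam nu pi' rp rm
        + ∑ e, (nu (tgt e) - nu (src e)) * (P' e - P e) := by
  have h2 : nu ⬝ᵥ (fun i => Pin i - (d i + D i * ω i) - (inc src tgt).mulVec P' i)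
      = nu ⬝ᵥ (fun i => Pin i - (d i + D i * ω i) - (inc src tgt).mulVec P i)
        - ∑ i, nu i * (inc src tgt).mulVec (fun e => P' e - P e) i := by
    unfold dotProduct
    rw [← Finset.sum_sub_distrib]
    refine Finset.sum_congr rfl fun i _ => ?_
    rw [mulVec_pt_sub]; ring
  have hd := dot_inc src tgt hne nu (fun e => P' e - P e)
  have h4 : ∑ e, (nu (tgt e) - nu (src e)) * (P' e - P e)
      = -∑ e, (nu (src e) - nu (tgt e)) * (P' e - P e) := by
    rw [← Finset.sum_neg_distrib]
    exact Finset.sum_congr rfl fun e _ => by ring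
  unfold Lag
  rw [h2, hd, h4]; ring

lemma Lag_phi_diff (hne : ∀ e, src e ≠ tgt e) (d ω φ φ' : N → ℝ) (P : E → ℝ)
    (lam nu : N → ℝ) (pi' : K → ℝ) (rp rm : E → ℝ) :
    Lag src tgt B D Chat Pin Phat Plo Phi c d ω φ' P lam nu pi' rp rm
      = Lag src tgt B D Chat Pin Phat Plo Phi c d ω φ P lam nu pi' rp rm
        + ∑ i, Mvec src tgt B Chat lam pi' rp rm i * (φ' i - φ i) := by
  have hM : ∑ i, Mvec src tgt B Chat lam pi' rp rm i * (φ' i - φ i)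
      = ∑ e, (Chat.transpose.mulVec pi' e + rp e - rm e - (lam (src e) - lam (tgt e)))
          * (B e * ((φ' (src e) - φ (src e)) - (φ' (tgt e) - φ (tgt e)))) := by
    have := sum_Mvec src tgt hne B Chat lam pi' rp rm (fun j => φ' j - φ j)
    simpa using this
  have h3 : lam ⬝ᵥ (fun i => Pin i - d i - (inc src tgt).mulVec (BCt src tgt B φ') i)
      = lam ⬝ᵥ (fun i => Pin i - d i - (inc src tgt).mulVec (BCt src tgt B φ) i)
        - ∑ i, lam i * (inc src tgt).mulVec
            (fun e => BCt src tgt B φ' e - BCt src tgt B φ e) i := by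
    unfold dotProduct
    rw [← Finset.sum_sub_distrib]
    refine Finset.sum_congr rfl fun i _ => ?_
    rw [mulVec_pt_sub]; ring
  have hd := dot_inc src tgt hne lam (fun e => BCt src tgt B φ' e - BCt src tgt B φ e)
  have h4 : pi' ⬝ᵥ (fun k => Chat.mulVec (BCt src tgt B φ') k - Phat k)
      = pi' ⬝ᵥ (fun k => Chat.mulVec (BCt src tgt B φ) k - Phat k)
        + ∑ e, Chat.transpose.mulVec pi' e * (BCt src tgt B φ' e - BCt src tgt B φ e) := by
    have key : ∀ w : E → ℝ, ∑ k, pi' k * Chat.mulVec w k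
        = ∑ e, Chat.transpose.mulVec pi' e * w e := by
      intro w
      have h := Matrix.dotProduct_mulVec pi' Chat w
      unfold dotProduct at h
      rw [h]
      refine Finset.sum_congr rfl fun e _ => ?_
      rw [Matrix.mulVec_transpose]
    unfold dotProduct
    beta_reduce
    have expand : ∀ k, pi' k * (Chat.mulVec (BCt src tgt B φ') k - Phat k)
        = pi' k * (Chat.mulVec (BCt src tgt B φ) k - Phat k)
          + pi' k * Chat.mulVec (fun e => BCt src tgt B φ' e - BCt src tgt B φ e) k := by
      intro k
      have : Chat.mulVec (fun e => BCt src tgt B φ' e - BCt src tgt B φ e) k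
          = Chat.mulVec (BCt src tgt B φ') k - Chat.mulVec (BCt src tgt B φ) k :=
        mulVec_pt_sub _ _ _ k
      rw [this]; ring
    calc ∑ k, pi' k * (Chat.mulVec (BCt src tgt B φ') k - Phat k)
        = ∑ k, (pi' k * (Chat.mulVec (BCt src tgt B φ) k - Phat k)
            + pi' k * Chat.mulVec (fun e => BCt src tgt B φ' e - BCt src tgt B φ e) k) :=
          Finset.sum_congr rfl fun k _ => expand k
      _ = (∑ k, pi' k * (Chat.mulVec (BCt src tgt B φ) k - Phat k))
            + ∑ k, pi' k * Chat.mulVec (fun e => BCt src tgt B φ' e - BCt src tgt B φ e) k :=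
          Finset.sum_add_distrib
      _ = _ := by
          rw [key (fun e => BCt src tgt B φ' e - BCt src tgt B φ e)]
  have h5 : rp ⬝ᵥ (fun e => BCt src tgt B φ' e - Phi e)
      = rp ⬝ᵥ (fun e => BCt src tgt B φ e - Phi e)
        + ∑ e, rp e * (BCt src tgt B φ' e - BCt src tgt B φ e) := by
    unfold dotProduct
    rw [← Finset.sum_add_distrib]; exact Finset.sum_congr rfl fun e _ => by ring
  have h6 : rm ⬝ᵥ (fun e => Plo e - BCt src tgt B φ' e)
      = rm ⬝ᵥ (fun e => Plo e - BCt src tgt B φ e)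
        - ∑ e, rm e * (BCt src tgt B φ' e - BCt src tgt B φ e) := by
    unfold dotProduct
    rw [← Finset.sum_sub_distrib]; exact Finset.sum_congr rfl fun e _ => by ring
  have h7 : ∑ e, (Chat.transpose.mulVec pi' e + rp e - rm e - (lam (src e) - lam (tgt e)))
          * (B e * ((φ' (src e) - φ (src e)) - (φ' (tgt e) - φ (tgt e))))
      = (∑ e, Chat.transpose.mulVec pi' e * (BCt src tgt B φ' e - BCt src tgt B φ e))
        + (∑ e, rp e * (BCt src tgt B φ' e - BCt src tgt B φ e))
        - (∑ e, rm e * (BCt src tgt B φ' e - BCt src tgt B φ e))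
        - ∑ e, (lam (src e) - lam (tgt e)) * (BCt src tgt B φ' e - BCt src tgt B φ e) := by
    rw [← Finset.sum_add_distrib, ← Finset.sum_sub_distrib, ← Finset.sum_sub_distrib]
    refine Finset.sum_congr rfl fun e _ => ?_
    unfold BCt; ring
  rw [hM, h7]
  unfold Lag
  rw [h3, hd, h4, h5, h6]; ring

lemma Lag_dual_diff (d ω φ : N → ℝ) (P : E → ℝ) (lam lam' nu nu' : N → ℝ)
    (pi' pi'' : K → ℝ) (rp rp' rm rm' : E → ℝ) :
    Lag src tgt B D Chat Pin Phat Plo Phi c d ω φ P lam' nu' pi'' rp' rm'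
      = Lag src tgt B D Chat Pin Phat Plo Phi c d ω φ P lam nu pi' rp rm
        + (∑ i, (nu' i - nu i)
            * (Pin i - (d i + D i * ω i) - (inc src tgt).mulVec P i))
        + (∑ i, (lam' i - lam i)
            * (Pin i - d i - (inc src tgt).mulVec (BCt src tgt B φ) i))
        + (∑ k, (pi'' k - pi' k) * (Chat.mulVec (BCt src tgt B φ) k - Phat k))
        + (∑ e, (rp' e - rp e) * (BCt src tgt B φ e - Phi e))
        + ∑ e, (rm' e - rm e) * (Plo e - BCt src tgt B φ e) := by
  unfold Lag
  rw [dot_split nu' nu, dot_split lam' lam, dot_split pi'' pi', dot_split rp' rp,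
    dot_split rm' rm]
  ring

end LagDiff

section MinMax
variable {N E K : Type*} [Fintype N] [Fintype E] [Fintype K] [DecidableEq N]
variable (src tgt : E → N) (B : E → ℝ) (D : N → ℝ) (Chat : Matrix K E ℝ)
  (Pin : N → ℝ) (Phat : K → ℝ) (Plo Phi : E → ℝ) (c : N → ℝ → ℝ)

set_option linter.unusedSectionVars false

lemma mul_self_nonpos_eq_zero {x : ℝ} (h : x * x ≤ 0) : x = 0 :=
  mul_self_eq_zero.mp (le_antisymm h (mul_self_nonneg x))

lemma zsum {ι : Type*} [Fintype ι] (u r : ι → ℝ) : ∑ i, (u i - u i) * r i = 0 :=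
  Finset.sum_eq_zero fun i _ => by ring

lemma lag_min_iff (hne : ∀ e, src e ≠ tgt e)
    (c' c'' : N → ℝ → ℝ) (α : ℝ) (hD : ∀ i, 0 < D i)
    (hc' : ∀ i x, HasDerivAt (c i) (c' i x) x)
    (hc'' : ∀ i x, HasDerivAt (c' i) (c'' i x) x)
    (hα : 0 < α) (hstrong : ∀ i x, α ≤ c'' i x)
    (d ω φ : N → ℝ) (P : E → ℝ) (lam nu : N → ℝ) (pi' : K → ℝ) (rp rm : E → ℝ) :
    (∀ d' ω' φ' : N → ℝ, ∀ P' : E → ℝ,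
        Lag src tgt B D Chat Pin Phat Plo Phi c d ω φ P lam nu pi' rp rm ≤
        Lag src tgt B D Chat Pin Phat Plo Phi c d' ω' φ' P' lam nu pi' rp rm) ↔
    ((∀ i, c' i (d i) = nu i + lam i) ∧ (∀ i, ω i = nu i) ∧
      (∀ e, nu (src e) = nu (tgt e)) ∧ (∀ i, Mvec src tgt B Chat lam pi' rp rm i = 0)) := by
  classical
  constructor
  · intro h
    refine ⟨fun i => ?_, fun i => ?_, fun e => ?_, fun i => ?_⟩
    · -- stationarity in d
      refine stationary_of_min (c i) (c' i) (hc' i) (nu i + lam i) (d i) fun s => ?_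
      have h1 := h (Function.update d i s) ω φ P
      rw [Lag_d_diff src tgt B D Chat Pin Phat Plo Phi c d (Function.update d i s)
        ω φ P lam nu pi' rp rm] at h1
      have h2 : ∑ j, ((c j (Function.update d i s j)
            - (nu j + lam j) * Function.update d i s j)
            - (c j (d j) - (nu j + lam j) * d j))
          = (c i s - (nu i + lam i) * s) - (c i (d i) - (nu i + lam i) * d i) := by
        rw [Finset.sum_eq_single_of_mem i (Finset.mem_univ i)]
        · rw [Function.update_self]
        · intro j _ hj; rw [Function.update_of_ne hj]; ring
      rw [h2] at h1; linarith
    · -- omega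
      have h1 := h d (Function.update ω i (nu i)) φ P
      rw [Lag_omega_diff src tgt B D Chat Pin Phat Plo Phi c d ω
        (Function.update ω i (nu i)) φ P lam nu pi' rp rm] at h1
      have h2 : ∑ j, (D j / 2 * (Function.update ω i (nu i) j - nu j) ^ 2
            - D j / 2 * (ω j - nu j) ^ 2)
          = D i / 2 * (nu i - nu i) ^ 2 - D i / 2 * (ω i - nu i) ^ 2 := by
        rw [Finset.sum_eq_single_of_mem i (Finset.mem_univ i)]
        · rw [Function.update_self]
        · intro j _ hj; rw [Function.update_of_ne hj]; ring
      rw [h2] at h1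
      have h3 : (ω i - nu i) ^ 2 ≤ 0 := by nlinarith [hD i]
      have h4 : ω i - nu i = 0 := by
        have h5 := le_antisymm h3 (sq_nonneg (ω i - nu i))
        exact (pow_eq_zero_iff two_ne_zero).mp h5
      linarith
    · -- P / nu constant
      set a := nu (tgt e) - nu (src e) with ha
      have h1 := h d ω φ (Function.update P e (P e - a))
      rw [Lag_P_diff src tgt B D Chat Pin Phat Plo Phi c hne d ω φ P
        (Function.update P e (P e - a)) lam nu pi' rp rm] at h1
      have h2 : ∑ e', (nu (tgt e') - nu (src e'))
            * (Function.update P e (P e - a) e' - P e') = a * (-a) := by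
        rw [Finset.sum_eq_single_of_mem e (Finset.mem_univ e)]
        · rw [Function.update_self]; ring
        · intro j _ hj; rw [Function.update_of_ne hj]; ring
      rw [h2] at h1
      have : a = 0 := mul_self_nonpos_eq_zero (by nlinarith)
      rw [ha] at this; linarith
    · -- phi / Mvec
      set a := Mvec src tgt B Chat lam pi' rp rm i with ha
      have h1 := h d ω (Function.update φ i (φ i - a)) P
      rw [Lag_phi_diff src tgt B D Chat Pin Phat Plo Phi c hne d ω φ
        (Function.update φ i (φ i - a)) P lam nu pi' rp rm] at h1
      have h2 : ∑ j, Mvec src tgt B Chat lam pi' rp rm j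
            * (Function.update φ i (φ i - a) j - φ j) = a * (-a) := by
        rw [Finset.sum_eq_single_of_mem i (Finset.mem_univ i)]
        · rw [Function.update_self, ← ha]; ring
        · intro j _ hj; rw [Function.update_of_ne hj]; ring
      rw [h2] at h1
      exact mul_self_nonpos_eq_zero (by nlinarith)
  · rintro ⟨h1, h2, h3, h4⟩ d' ω' φ' P'
    have s1 : Lag src tgt B D Chat Pin Phat Plo Phi c d ω φ P lam nu pi' rp rm
        ≤ Lag src tgt B D Chat Pin Phat Plo Phi c d' ω φ P lam nu pi' rp rm := by
      rw [Lag_d_diff src tgt B D Chat Pin Phat Plo Phi c d d' ω φ P lam nu pi' rp rm]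
      have : 0 ≤ ∑ i, ((c i (d' i) - (nu i + lam i) * d' i)
          - (c i (d i) - (nu i + lam i) * d i)) := by
        refine Finset.sum_nonneg fun i _ => ?_
        have := conv_min (c i) (c' i) (c'' i) (hc' i) (hc'' i) hα (hstrong i)
          (h1 i) (d' i)
        linarith
      linarith
    have s2 : Lag src tgt B D Chat Pin Phat Plo Phi c d' ω φ P lam nu pi' rp rm
        ≤ Lag src tgt B D Chat Pin Phat Plo Phi c d' ω' φ P lam nu pi' rp rm := by
      rw [Lag_omega_diff src tgt B D Chat Pin Phat Plo Phi c d' ω ω' φ P lam nu pi' rp rm]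
      have : 0 ≤ ∑ i, (D i / 2 * (ω' i - nu i) ^ 2 - D i / 2 * (ω i - nu i) ^ 2) := by
        refine Finset.sum_nonneg fun i _ => ?_
        have hz : ω i - nu i = 0 := by rw [h2 i]; ring
        rw [hz]
        have := sq_nonneg (ω' i - nu i)
        have := (hD i).le
        nlinarith
      linarith
    have s3 : Lag src tgt B D Chat Pin Phat Plo Phi c d' ω' φ P lam nu pi' rp rm
        = Lag src tgt B D Chat Pin Phat Plo Phi c d' ω' φ' P lam nu pi' rp rm := by
      rw [Lag_phi_diff src tgt B D Chat Pin Phat Plo Phi c hne d' ω' φ φ' P lam nu pi' rp rm]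
      have : ∑ i, Mvec src tgt B Chat lam pi' rp rm i * (φ' i - φ i) = 0 :=
        Finset.sum_eq_zero fun i _ => by rw [h4 i]; ring
      rw [this]; ring
    have s4 : Lag src tgt B D Chat Pin Phat Plo Phi c d' ω' φ' P lam nu pi' rp rm
        = Lag src tgt B D Chat Pin Phat Plo Phi c d' ω' φ' P' lam nu pi' rp rm := by
      rw [Lag_P_diff src tgt B D Chat Pin Phat Plo Phi c hne d' ω' φ' P P' lam nu pi' rp rm]
      have : ∑ e, (nu (tgt e) - nu (src e)) * (P' e - P e) = 0 :=
        Finset.sum_eq_zero fun e _ => by rw [← h3 e]; ring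
      rw [this]; ring
    linarith

lemma lag_max_iff (d ω φ : N → ℝ) (P : E → ℝ) (lam nu : N → ℝ) (pi' : K → ℝ)
    (rp rm : E → ℝ) (hrp : ∀ e, 0 ≤ rp e) (hrm : ∀ e, 0 ≤ rm e) :
    (∀ lam' nu' : N → ℝ, ∀ pi'' : K → ℝ, ∀ rp' rm' : E → ℝ,
        (∀ e, 0 ≤ rp' e) → (∀ e, 0 ≤ rm' e) →
        Lag src tgt B D Chat Pin Phat Plo Phi c d ω φ P lam' nu' pi'' rp' rm' ≤
        Lag src tgt B D Chat Pin Phat Plo Phi c d ω φ P lam nu pi' rp rm) ↔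
    (Feas src tgt B D Chat Pin Phat Plo Phi d ω φ P ∧
      ∀ e, rp e * (BCt src tgt B φ e - Phi e) = 0
        ∧ rm e * (Plo e - BCt src tgt B φ e) = 0) := by
  classical
  constructor
  · intro h
    have key : ∀ (lam' nu' : N → ℝ) (pi'' : K → ℝ) (rp' rm' : E → ℝ),
        (∀ e, 0 ≤ rp' e) → (∀ e, 0 ≤ rm' e) →
        (∑ i, (nu' i - nu i) * (Pin i - (d i + D i * ω i) - (inc src tgt).mulVec P i))
        + (∑ i, (lam' i - lam i)
            * (Pin i - d i - (inc src tgt).mulVec (BCt src tgt B φ) i))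
        + (∑ k, (pi'' k - pi' k) * (Chat.mulVec (BCt src tgt B φ) k - Phat k))
        + (∑ e, (rp' e - rp e) * (BCt src tgt B φ e - Phi e))
        + (∑ e, (rm' e - rm e) * (Plo e - BCt src tgt B φ e)) ≤ 0 := by
      intro lam' nu' pi'' rp' rm' h1 h2
      have h3 := h lam' nu' pi'' rp' rm' h1 h2
      rw [Lag_dual_diff src tgt B D Chat Pin Phat Plo Phi c d ω φ P lam lam' nu nu'
        pi' pi'' rp rp' rm rm'] at h3
      linarith
    have feq1 : ∀ i, Pin i - (d i + D i * ω i) = (inc src tgt).mulVec P i := by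
      intro i
      set r := fun i => Pin i - (d i + D i * ω i) - (inc src tgt).mulVec P i with hr
      have hk := key lam (Function.update nu i (nu i + r i)) pi' rp rm hrp hrm
      rw [zsum lam, zsum pi', zsum rp, zsum rm] at hk
      have h2 : ∑ j, (Function.update nu i (nu i + r i) j - nu j) * r j = r i * r i := by
        rw [Finset.sum_eq_single_of_mem i (Finset.mem_univ i)]
        · rw [Function.update_self]; ring
        · intro j _ hj; rw [Function.update_of_ne hj]; ring
      rw [h2] at hk
      have := mul_self_nonpos_eq_zero (by linarith : r i * r i ≤ 0)
      rw [hr] at this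
      exact sub_eq_zero.mp this
    have feq2 : ∀ i, Pin i - d i = (inc src tgt).mulVec (BCt src tgt B φ) i := by
      intro i
      set r := fun i => Pin i - d i - (inc src tgt).mulVec (BCt src tgt B φ) i with hr
      have hk := key (Function.update lam i (lam i + r i)) nu pi' rp rm hrp hrm
      rw [zsum nu, zsum pi', zsum rp, zsum rm] at hk
      have h2 : ∑ j, (Function.update lam i (lam i + r i) j - lam j) * r j = r i * r i := by
        rw [Finset.sum_eq_single_of_mem i (Finset.mem_univ i)]
        · rw [Function.update_self]; ring
        · intro j _ hj; rw [Function.update_of_ne hj]; ring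
      rw [h2] at hk
      have := mul_self_nonpos_eq_zero (by linarith : r i * r i ≤ 0)
      rw [hr] at this
      exact sub_eq_zero.mp this
    have feq3 : ∀ k, Chat.mulVec (BCt src tgt B φ) k = Phat k := by
      intro k
      set r := fun k => Chat.mulVec (BCt src tgt B φ) k - Phat k with hr
      have hk := key lam nu (Function.update pi' k (pi' k + r k)) rp rm hrp hrm
      rw [zsum nu, zsum lam, zsum rp, zsum rm] at hk
      have h2 : ∑ j, (Function.update pi' k (pi' k + r k) j - pi' j) * r j = r k * r k := by
        rw [Finset.sum_eq_single_of_mem k (Finset.mem_univ k)]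
        · rw [Function.update_self]; ring
        · intro j _ hj; rw [Function.update_of_ne hj]; ring
      rw [h2] at hk
      have := mul_self_nonpos_eq_zero (by linarith : r k * r k ≤ 0)
      rw [hr] at this
      exact sub_eq_zero.mp this
    have hub : ∀ e, BCt src tgt B φ e - Phi e ≤ 0 := by
      intro e
      have hn : ∀ e', 0 ≤ Function.update rp e (rp e + 1) e' := by
        intro e'
        by_cases he : e' = e
        · subst he; rw [Function.update_self]; linarith [hrp e']
        · rw [Function.update_of_ne he]; exact hrp e'
      have hk := key lam nu pi' (Function.update rp e (rp e + 1)) rm hn hrm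
      rw [zsum nu, zsum lam, zsum pi', zsum rm] at hk
      have h2 : ∑ j, (Function.update rp e (rp e + 1) j - rp j)
          * (BCt src tgt B φ j - Phi j) = BCt src tgt B φ e - Phi e := by
        rw [Finset.sum_eq_single_of_mem e (Finset.mem_univ e)]
        · rw [Function.update_self]; ring
        · intro j _ hj; rw [Function.update_of_ne hj]; ring
      rw [h2] at hk
      linarith
    have hlb : ∀ e, Plo e - BCt src tgt B φ e ≤ 0 := by
      intro e
      have hn : ∀ e', 0 ≤ Function.update rm e (rm e + 1) e' := by
        intro e'
        by_cases he : e' = e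
        · subst he; rw [Function.update_self]; linarith [hrm e']
        · rw [Function.update_of_ne he]; exact hrm e'
      have hk := key lam nu pi' rp (Function.update rm e (rm e + 1)) hrp hn
      rw [zsum nu, zsum lam, zsum pi', zsum rp] at hk
      have h2 : ∑ j, (Function.update rm e (rm e + 1) j - rm j)
          * (Plo j - BCt src tgt B φ j) = Plo e - BCt src tgt B φ e := by
        rw [Finset.sum_eq_single_of_mem e (Finset.mem_univ e)]
        · rw [Function.update_self]; ring
        · intro j _ hj; rw [Function.update_of_ne hj]; ring
      rw [h2] at hk
      linarith
    have hcs1 : ∀ e, rp e * (BCt src tgt B φ e - Phi e) = 0 := by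
      intro e
      have hn : ∀ e', 0 ≤ Function.update rp e 0 e' := by
        intro e'
        by_cases he : e' = e
        · subst he; rw [Function.update_self]
        · rw [Function.update_of_ne he]; exact hrp e'
      have hk := key lam nu pi' (Function.update rp e 0) rm hn hrm
      rw [zsum nu, zsum lam, zsum pi', zsum rm] at hk
      have h2 : ∑ j, (Function.update rp e 0 j - rp j) * (BCt src tgt B φ j - Phi j)
          = -(rp e * (BCt src tgt B φ e - Phi e)) := by
        rw [Finset.sum_eq_single_of_mem e (Finset.mem_univ e)]
        · rw [Function.update_self]; ring
        · intro j _ hj; rw [Function.update_of_ne hj]; ring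
      rw [h2] at hk
      have hle : rp e * (BCt src tgt B φ e - Phi e) ≤ 0 :=
        mul_nonpos_of_nonneg_of_nonpos (hrp e) (hub e)
      linarith
    have hcs2 : ∀ e, rm e * (Plo e - BCt src tgt B φ e) = 0 := by
      intro e
      have hn : ∀ e', 0 ≤ Function.update rm e 0 e' := by
        intro e'
        by_cases he : e' = e
        · subst he; rw [Function.update_self]
        · rw [Function.update_of_ne he]; exact hrm e'
      have hk := key lam nu pi' rp (Function.update rm e 0) hrp hn
      rw [zsum nu, zsum lam, zsum pi', zsum rp] at hk
      have h2 : ∑ j, (Function.update rm e 0 j - rm j) * (Plo j - BCt src tgt B φ j)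
          = -(rm e * (Plo e - BCt src tgt B φ e)) := by
        rw [Finset.sum_eq_single_of_mem e (Finset.mem_univ e)]
        · rw [Function.update_self]; ring
        · intro j _ hj; rw [Function.update_of_ne hj]; ring
      rw [h2] at hk
      have hle : rm e * (Plo e - BCt src tgt B φ e) ≤ 0 :=
        mul_nonpos_of_nonneg_of_nonpos (hrm e) (hlb e)
      linarith
    exact ⟨⟨feq1, feq2, feq3, fun e => ⟨by linarith [hlb e], by linarith [hub e]⟩⟩,
      fun e => ⟨hcs1 e, hcs2 e⟩⟩
  · rintro ⟨⟨f1, f2, f3, f4⟩, hcs⟩ lam' nu' pi'' rp' rm' hrp' hrm'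
    rw [Lag_dual_diff src tgt B D Chat Pin Phat Plo Phi c d ω φ P lam lam' nu nu'
      pi' pi'' rp rp' rm rm']
    have z1 : ∑ i, (nu' i - nu i)
        * (Pin i - (d i + D i * ω i) - (inc src tgt).mulVec P i) = 0 :=
      Finset.sum_eq_zero fun i _ => by rw [sub_eq_zero.mpr (f1 i)]; ring
    have z2 : ∑ i, (lam' i - lam i)
        * (Pin i - d i - (inc src tgt).mulVec (BCt src tgt B φ) i) = 0 :=
      Finset.sum_eq_zero fun i _ => by rw [sub_eq_zero.mpr (f2 i)]; ring
    have z3 : ∑ k, (pi'' k - pi' k) * (Chat.mulVec (BCt src tgt B φ) k - Phat k) = 0 :=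
      Finset.sum_eq_zero fun k _ => by rw [sub_eq_zero.mpr (f3 k)]; ring
    have z4 : ∑ e, (rp' e - rp e) * (BCt src tgt B φ e - Phi e) ≤ 0 := by
      refine Finset.sum_nonpos fun e _ => ?_
      have h1 : rp' e * (BCt src tgt B φ e - Phi e) ≤ 0 :=
        mul_nonpos_of_nonneg_of_nonpos (hrp' e) (by linarith [(f4 e).2])
      have h2 := (hcs e).1
      nlinarith [h1, h2]
    have z5 : ∑ e, (rm' e - rm e) * (Plo e - BCt src tgt B φ e) ≤ 0 := by
      refine Finset.sum_nonpos fun e _ => ?_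
      have h1 : rm' e * (Plo e - BCt src tgt B φ e) ≤ 0 :=
        mul_nonpos_of_nonneg_of_nonpos (hrm' e) (by linarith [(f4 e).1])
      have h2 := (hcs e).2
      nlinarith [h1, h2]
    rw [z1, z2, z3]
    linarith

end MinMax

/-- on a connected network with `B > 0`, `D > 0`, strongly convex `C²` costs
and feasible VF-OLC, a point with `ρ⁺*,ρ⁻* ≥ 0` is a saddle point of the VF-OLC
Lagrangian iff the KKT conditions (i)–(v) hold; moreover the components `d*,ω*,ν*,λ*`
are the same for every saddle point, and `ω* = ν* = 0`. -/
theorem saddle_iff_KKT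
    (src tgt : E → N) (B : E → ℝ) (D : N → ℝ) (Chat : Matrix K E ℝ)
    (Pin : N → ℝ) (Phat : K → ℝ) (Plo Phi : E → ℝ)
    (c c' c'' : N → ℝ → ℝ) (α : ℝ)
    (hne : ∀ e, src e ≠ tgt e)
    (hconn : ∀ ψ : N → ℝ, (∀ e, ψ (src e) = ψ (tgt e)) → ∀ i j, ψ i = ψ j)
    (hB : ∀ e, 0 < B e) (hD : ∀ i, 0 < D i) (hPlim : ∀ e, Plo e ≤ Phi e)
    (hc' : ∀ i x, HasDerivAt (c i) (c' i x) x)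
    (hc'' : ∀ i x, HasDerivAt (c' i) (c'' i x) x)
    (hc''cont : ∀ i, Continuous (c'' i))
    (hα : 0 < α) (hstrong : ∀ i x, α ≤ c'' i x)
    (hfeas : ∃ d ω φ P, Feas src tgt B D Chat Pin Phat Plo Phi d ω φ P)
    (dS ωS φS : N → ℝ) (PS : E → ℝ) (lamS nuS : N → ℝ) (piS : K → ℝ) (rpS rmS : E → ℝ) :
    (Saddle src tgt B D Chat Pin Phat Plo Phi c dS ωS φS PS lamS nuS piS rpS rmS ↔
      KKT src tgt B D Chat Pin Phat Plo Phi c' dS ωS φS PS lamS nuS piS rpS rmS) ∧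
    (Saddle src tgt B D Chat Pin Phat Plo Phi c dS ωS φS PS lamS nuS piS rpS rmS →
      ωS = 0 ∧ nuS = 0) ∧
    (∀ d₂ ω₂ φ₂ : N → ℝ, ∀ P₂ : E → ℝ, ∀ lam₂ nu₂ : N → ℝ, ∀ pi₂ : K → ℝ,
      ∀ rp₂ rm₂ : E → ℝ,
      Saddle src tgt B D Chat Pin Phat Plo Phi c dS ωS φS PS lamS nuS piS rpS rmS →
      Saddle src tgt B D Chat Pin Phat Plo Phi c d₂ ω₂ φ₂ P₂ lam₂ nu₂ pi₂ rp₂ rm₂ →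
      dS = d₂ ∧ ωS = ω₂ ∧ nuS = nu₂ ∧ lamS = lam₂) := by
  classical
  have hmono : ∀ i, StrictMono (c' i) := fun i =>
    strictmono_of_c'' (c' i) (c'' i) (hc'' i) hα (hstrong i)
  have main : ∀ (d ω φ : N → ℝ) (P : E → ℝ) (lam nu : N → ℝ) (pi' : K → ℝ)
      (rp rm : E → ℝ),
      Saddle src tgt B D Chat Pin Phat Plo Phi c d ω φ P lam nu pi' rp rm ↔
      KKT src tgt B D Chat Pin Phat Plo Phi c' d ω φ P lam nu pi' rp rm := by
    intro d ω φ P lam nu pi' rp rm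
    constructor
    · rintro ⟨hrp, hrm, hmin, hmax⟩
      obtain ⟨hst, hωn, hνc, hMv⟩ :=
        (lag_min_iff src tgt B D Chat Pin Phat Plo Phi c hne c' c'' α hD hc' hc''
          hα hstrong d ω φ P lam nu pi' rp rm).mp hmin
      obtain ⟨hfe, hcs⟩ :=
        (lag_max_iff src tgt B D Chat Pin Phat Plo Phi c d ω φ P lam nu pi' rp rm
          hrp hrm).mp hmax
      refine ⟨hfe, fun e => ⟨hrp e, hrm e⟩, hωn, hst, ?_, hMv, hcs⟩
      cases isEmpty_or_nonempty N with
      | inl hN => exact ⟨0, fun i => isEmptyElim i⟩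
      | inr hN =>
        obtain ⟨i0⟩ := hN
        exact ⟨nu i0, fun i => hconn nu hνc i i0⟩
    · rintro ⟨hfe, hsgn, hωn, hst, ⟨nuhat, hnu⟩, hMv, hcs⟩
      refine ⟨fun e => (hsgn e).1, fun e => (hsgn e).2, ?_, ?_⟩
      · exact (lag_min_iff src tgt B D Chat Pin Phat Plo Phi c hne c' c'' α hD hc' hc''
          hα hstrong d ω φ P lam nu pi' rp rm).mpr
          ⟨hst, hωn, fun e => by rw [hnu (src e), hnu (tgt e)], hMv⟩
      · exact (lag_max_iff src tgt B D Chat Pin Phat Plo Phi c d ω φ P lam nu pi' rp rm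
          (fun e => (hsgn e).1) (fun e => (hsgn e).2)).mpr ⟨hfe, hcs⟩
  have zero : ∀ (d ω φ : N → ℝ) (P : E → ℝ) (lam nu : N → ℝ) (pi' : K → ℝ)
      (rp rm : E → ℝ),
      Saddle src tgt B D Chat Pin Phat Plo Phi c d ω φ P lam nu pi' rp rm →
      ω = 0 ∧ nu = 0 := by
    intro d ω φ P lam nu pi' rp rm hS
    obtain ⟨hfe, _, hωn, _, ⟨nuhat, hnu⟩, _, _⟩ :=
      (main d ω φ P lam nu pi' rp rm).mp hS
    cases isEmpty_or_nonempty N with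
    | inl hN =>
      constructor <;> funext i <;> exact isEmptyElim i
    | inr hN =>
      have hz : ∀ w : E → ℝ, ∑ i, (inc src tgt).mulVec w i = 0 := by
        intro w
        have h := dot_inc src tgt hne (fun _ => (1:ℝ)) w
        simpa using h
      have hsum : ∑ i, D i * ω i = 0 := by
        have h1 : ∀ i, D i * ω i = (inc src tgt).mulVec (BCt src tgt B φ) i
            - (inc src tgt).mulVec P i := by
          intro i
          have a1 := hfe.1 i
          have a2 := hfe.2.1 i
          linarith
        calc ∑ i, D i * ω i
            = ∑ i, ((inc src tgt).mulVec (BCt src tgt B φ) i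
                - (inc src tgt).mulVec P i) := Finset.sum_congr rfl fun i _ => h1 i
          _ = (∑ i, (inc src tgt).mulVec (BCt src tgt B φ) i)
                - ∑ i, (inc src tgt).mulVec P i := Finset.sum_sub_distrib _ _
          _ = 0 := by rw [hz, hz]; ring
      have hω : ∀ i, ω i = nuhat := fun i => by rw [hωn i, hnu i]
      have hDsum : ∑ i, D i * ω i = (∑ i, D i) * nuhat := by
        rw [Finset.sum_mul]
        exact Finset.sum_congr rfl fun i _ => by rw [hω i]
      have hDpos : 0 < ∑ i, D i := Finset.sum_pos (fun i _ => hD i) Finset.univ_nonempty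
      have hnz : nuhat = 0 := by
        rcases mul_eq_zero.mp (hDsum ▸ hsum) with h | h
        · exact absurd h (ne_of_gt hDpos)
        · exact h
      constructor
      · funext i; rw [hω i, hnz]; rfl
      · funext i; rw [hnu i, hnz]; rfl
  refine ⟨main dS ωS φS PS lamS nuS piS rpS rmS,
    zero dS ωS φS PS lamS nuS piS rpS rmS, ?_⟩
  intro d₂ ω₂ φ₂ P₂ lam₂ nu₂ pi₂ rp₂ rm₂ hS1 hS2
  obtain ⟨hrp1, hrm1, hmin1, hmax1⟩ := hS1
  obtain ⟨hrp2, hrm2, hmin2, hmax2⟩ := hS2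
  have A2 := hmax2 lamS nuS piS rpS rmS hrp1 hrm1
  have A3 := hmin2 dS ωS φS PS
  have A4 := hmax1 lam₂ nu₂ pi₂ rp₂ rm₂ hrp2 hrm2
  have hM : ∀ (d' ω' φ' : N → ℝ) (P' : E → ℝ),
      Lag src tgt B D Chat Pin Phat Plo Phi c d₂ ω₂ φ₂ P₂ lamS nuS piS rpS rmS ≤
      Lag src tgt B D Chat Pin Phat Plo Phi c d' ω' φ' P' lamS nuS piS rpS rmS := by
    intro d' ω' φ' P'
    have h := hmin1 d' ω' φ' P'
    linarith
  obtain ⟨st2, om2, _, _⟩ :=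
    (lag_min_iff src tgt B D Chat Pin Phat Plo Phi c hne c' c'' α hD hc' hc'' hα
      hstrong d₂ ω₂ φ₂ P₂ lamS nuS piS rpS rmS).mp hM
  obtain ⟨st1, om1, _, _⟩ :=
    (lag_min_iff src tgt B D Chat Pin Phat Plo Phi c hne c' c'' α hD hc' hc'' hα
      hstrong dS ωS φS PS lamS nuS piS rpS rmS).mp hmin1
  obtain ⟨st3, om3, _, _⟩ :=
    (lag_min_iff src tgt B D Chat Pin Phat Plo Phi c hne c' c'' α hD hc' hc'' hα
      hstrong d₂ ω₂ φ₂ P₂ lam₂ nu₂ pi₂ rp₂ rm₂).mp hmin2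
  have hd : dS = d₂ := funext fun i => (hmono i).injective (by rw [st1 i, st2 i])
  have hν : nuS = nu₂ := funext fun i => by rw [← om2 i, om3 i]
  refine ⟨hd, funext fun i => by rw [om1 i, om2 i], hν, funext fun i => ?_⟩
  have e1 := st1 i
  have e3 := st3 i
  have e2 : c' i (dS i) = c' i (d₂ i) := by rw [hd]
  have e4 : nuS i = nu₂ i := by rw [hν]
  linarith

end
end

section
/- Let c : ℝ → ℝ be twice continuously differentiable with c''(s) ≥ α > 0 for all s ∈ ℝ, so that c' is a strictly increasing bijection of ℝ onto ℝ; let d = (c')⁻¹, and let D > 0 and p ∈ ℝ be constants. Then the function Φ : ℝ² → ℝ defined by Φ(λ,ν) = c(d(λ+ν)) − (λ+ν)·d(λ+ν) − D·ν²/2 + (λ+ν)·p is strictly concave on ℝ². -/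
/-- Let `c : ℝ → ℝ` be twice continuously differentiable with `c'' ≥ α > 0`
(so `c'` is a strictly increasing bijection of `ℝ` onto `ℝ`), let `d = (c')⁻¹` and `D > 0`,
`p ∈ ℝ`. Then `Φ(λ,ν) = c(d(λ+ν)) − (λ+ν)d(λ+ν) − Dν²/2 + (λ+ν)p` is strictly concave
on `ℝ²`. -/
theorem dual_objective_strictly_concave
    (c c' c'' d : ℝ → ℝ) (α : ℝ) (hα : 0 < α)
    (hc' : ∀ x, HasDerivAt c (c' x) x)
    (hc'' : ∀ x, HasDerivAt c' (c'' x) x)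
    (hc''cont : Continuous c'')
    (hstrong : ∀ x, α ≤ c'' x)
    (hd_right : ∀ t, c' (d t) = t) (hd_left : ∀ s, d (c' s) = s)
    (D p : ℝ) (hD : 0 < D) :
    StrictConcaveOn ℝ Set.univ
      (fun q : ℝ × ℝ =>
        c (d (q.1 + q.2)) - (q.1 + q.2) * d (q.1 + q.2) - D * q.2 ^ 2 / 2 + (q.1 + q.2) * p) := by
  -- c'' is positive everywhere
  have hc''pos : ∀ x, 0 < c'' x := fun x => lt_of_lt_of_le hα (hstrong x)
  -- c' is strictly monotone
  have hc'mono : StrictMono c' := by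
    apply strictMono_of_deriv_pos
    intro x
    rw [(hc'' x).deriv]
    exact hc''pos x
  -- d is strictly monotone
  have hdmono : StrictMono d := by
    intro t₁ t₂ h
    have := hc'mono.lt_iff_lt (a := d t₁) (b := d t₂)
    rw [hd_right, hd_right] at this
    exact this.mp h
  -- d is continuous
  have hdsurj : Function.Surjective d := fun s => ⟨c' s, hd_left s⟩
  have hdcont : Continuous d := hdmono.monotone.continuous_of_surjective hdsurj
  -- d is differentiable with derivative (c'' (d t))⁻¹
  have hd' : ∀ t, HasDerivAt d (c'' (d t))⁻¹ t := fun t =>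
    HasDerivAt.of_local_left_inverse hdcont.continuousAt (hc'' (d t))
      (ne_of_gt (hc''pos (d t))) (Filter.Eventually.of_forall hd_right)
  -- the 1-d function g
  set g : ℝ → ℝ := fun t => c (d t) - t * d t + t * p with hg_def
  have hg' : ∀ t, HasDerivAt g (p - d t) t := by
    intro t
    have h1 : HasDerivAt (fun t => c (d t)) (c' (d t) * (c'' (d t))⁻¹) t :=
      (hc' (d t)).comp t (hd' t)
    have h2 : HasDerivAt (fun t : ℝ => t * d t) (1 * d t + t * (c'' (d t))⁻¹) t :=
      (hasDerivAt_id t).mul (hd' t)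
    have h3 : HasDerivAt (fun t : ℝ => t * p) p t := by
      simpa using (hasDerivAt_id t).mul_const p
    have := (h1.sub h2).add h3
    refine this.congr_deriv ?_
    rw [hd_right]
    ring
  -- g is strictly concave
  have hgdiff : ∀ t, DifferentiableAt ℝ g t := fun t => (hg' t).differentiableAt
  have hgcont : Continuous g := by
    have : Differentiable ℝ g := hgdiff
    exact this.continuous
  have hderiv : deriv g = fun t => p - d t := funext fun t => (hg' t).deriv
  have hganti : StrictAnti (deriv g) := by
    intro t₁ t₂ h
    have h2 : deriv g t₁ = p - d t₁ := by rw [hderiv]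
    have h3 : deriv g t₂ = p - d t₂ := by rw [hderiv]
    rw [h2, h3]
    have := hdmono h
    linarith
  have hgcc : StrictConcaveOn ℝ Set.univ g :=
    StrictAnti.strictConcaveOn_univ_of_deriv hgcont hganti
  clear_value g
  -- strict convexity of the square
  have hsq : StrictConvexOn ℝ Set.univ (fun x : ℝ => x ^ 2) :=
    Even.strictConvexOn_pow even_two two_ne_zero
  -- assemble
  constructor
  · exact convex_univ
  intro q hq r hr hne a b ha hb hab
  simp only [smul_eq_mul, Prod.fst_add, Prod.snd_add, Prod.smul_fst, Prod.smul_snd,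
    smul_eq_mul]
  have hsum : (a * q.1 + b * r.1) + (a * q.2 + b * r.2)
      = a * (q.1 + q.2) + b * (r.1 + r.2) := by ring
  rw [hsum]
  set s₁ := q.1 + q.2
  set s₂ := r.1 + r.2
  -- concavity / convexity facts
  have hgconc := hgcc.concaveOn.2 (Set.mem_univ s₁) (Set.mem_univ s₂) ha.le hb.le hab
  have hsqconv := hsq.convexOn.2 (Set.mem_univ q.2) (Set.mem_univ r.2) ha.le hb.le hab
  simp only [smul_eq_mul] at hgconc hsqconv
  have lhs_eq : a * (c (d s₁) - s₁ * d s₁ - D * q.2 ^ 2 / 2 + s₁ * p)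
      + b * (c (d s₂) - s₂ * d s₂ - D * r.2 ^ 2 / 2 + s₂ * p)
      = (a * g s₁ + b * g s₂) - D * (a * q.2 ^ 2 + b * r.2 ^ 2) / 2 := by
    simp only [hg_def]; ring
  have rhs_eq : c (d (a * s₁ + b * s₂)) - (a * s₁ + b * s₂) * d (a * s₁ + b * s₂)
      - D * (a * q.2 + b * r.2) ^ 2 / 2 + (a * s₁ + b * s₂) * p
      = g (a * s₁ + b * s₂) - D * (a * q.2 + b * r.2) ^ 2 / 2 := by
    simp only [hg_def]; ring
  rw [lhs_eq, rhs_eq]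
  by_cases hs : s₁ = s₂
  · -- then q.2 ≠ r.2
    have hν : q.2 ≠ r.2 := by
      intro h2
      apply hne
      have hss : q.1 + q.2 = r.1 + r.2 := hs
      have h1 : q.1 = r.1 := by rw [h2] at hss; linarith
      exact Prod.ext h1 h2
    have hsqstrict := hsq.2 (Set.mem_univ q.2) (Set.mem_univ r.2) hν ha hb hab
    simp only [smul_eq_mul] at hsqstrict
    have hgeq : g (a * s₁ + b * s₂) = a * g s₁ + b * g s₂ := by
      rw [← hs]
      have h1 : a * s₁ + b * s₁ = s₁ := by rw [← add_mul, hab, one_mul]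
      rw [h1]
      rw [← add_mul, hab, one_mul]
    have hmul := mul_lt_mul_of_pos_left hsqstrict hD
    linarith [hgeq, hmul]
  · have hgstrict := hgcc.2 (Set.mem_univ s₁) (Set.mem_univ s₂) hs ha hb hab
    simp only [smul_eq_mul] at hgstrict
    have hmul := mul_le_mul_of_nonneg_left hsqconv hD.le
    linarith [hgstrict, hmul]
end

section
/- Let n ∈ ℕ, S ⊆ {1,…,n}, and let a, u, u* ∈ ℝⁿ with u*_i ≥ 0 for every i ∈ S. Then Σ_{i=1}^n (u_i − u*_i)·([a]⁺_{u,S})_i ≤ Σ_{i=1}^n (u_i − u*_i)·a_i. -/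
open BigOperators

/-- Componentwise projection `[a]⁺_{u,S}`: for `i ∈ S` the value is `a i` if `a i > 0` or
`u i > 0`, and `0` otherwise; for `i ∉ S` it is just `a i`. -/
noncomputable def posProj {n : ℕ} (S : Finset (Fin n)) (u a : Fin n → ℝ) : Fin n → ℝ :=
  fun i => if i ∈ S then (if 0 < a i ∨ 0 < u i then a i else 0) else a i

/-- If `u*_i ≥ 0` for every `i ∈ S`, then
`Σ (u_i − u*_i)·([a]⁺_{u,S})_i ≤ Σ (u_i − u*_i)·a_i`. -/
theorem projection_property {n : ℕ} (S : Finset (Fin n)) (a u ustar : Fin n → ℝ)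
    (hustar : ∀ i ∈ S, 0 ≤ ustar i) :
    ∑ i, (u i - ustar i) * posProj S u a i ≤ ∑ i, (u i - ustar i) * a i := by
  apply Finset.sum_le_sum
  intro i _
  unfold posProj
  by_cases hS : i ∈ S
  · simp only [hS, if_true]
    by_cases hc : 0 < a i ∨ 0 < u i
    · simp [hc]
    · push_neg at hc
      rw [if_neg (by push_neg; exact hc), mul_zero]
      have h1 : u i - ustar i ≤ 0 := by linarith [hustar i hS, hc.2]
      nlinarith [hc.1, h1]
  · simp [hS]
end

section
/- Let L_B be the weighted Laplacian of a finite connected undirected graph on vertex set N with positive edge weights, let Z ⊆ N be a nonempty proper subset and V = N ∖ Z, and define the Schur complement L♯ = L_{B,(V,V)} − L_{B,(V,Z)} L_{B,(Z,Z)}⁻¹ L_{B,(Z,V)}. Then L♯ is the weighted Laplacian of a graph on V with nonnegative edge weights; that is, L♯ is symmetric positive semidefinite, has zero row sums (L♯ 1 = 0), and all its off-diagonal entries are nonpositive. -/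
open Matrix BigOperators

/-- The weighted Laplacian of an undirected graph `G` with edge weights `B`:
`(L_B)_{ii} = Σ_{j∈N_i} B_{ij}`, `(L_B)_{ij} = −B_{ij}` on edges, and `0` otherwise. -/
noncomputable def weightedLap {N : Type*} [Fintype N] [DecidableEq N]
    (G : SimpleGraph N) [DecidableRel G.Adj] (B : N → N → ℝ) : Matrix N N ℝ :=
  Matrix.of fun i j =>
    if i = j then ∑ k ∈ G.neighborFinset i, B i k
    else if G.Adj i j then -B i j else 0

section Aux

variable {N : Type*} [Fintype N] [DecidableEq N]
  (G : SimpleGraph N) [DecidableRel G.Adj] (B : N → N → ℝ)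

lemma lap_apply_eq (i j : N) :
    weightedLap G B i j =
      (if i = j then ∑ k, (if G.Adj i k then B i k else 0) else 0)
        + (if G.Adj i j then -B i j else 0) := by
  by_cases h : i = j
  · subst h
    simp [weightedLap, SimpleGraph.neighborFinset_eq_filter, Finset.sum_filter]
  · simp [weightedLap, h]

lemma lap_offdiag (hpos : ∀ i j, G.Adj i j → 0 < B i j) {i j : N} (h : i ≠ j) :
    weightedLap G B i j ≤ 0 := by
  rw [lap_apply_eq, if_neg h, zero_add]
  split_ifs with ha
  · linarith [hpos i j ha]
  · exact le_refl 0

lemma lap_symm_apply (hsymm : ∀ i j, B i j = B j i) (i j : N) :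
    weightedLap G B j i = weightedLap G B i j := by
  by_cases h : i = j
  · subst h; rfl
  · rw [lap_apply_eq, lap_apply_eq, if_neg h, if_neg (Ne.symm h)]
    have hadj : G.Adj j i ↔ G.Adj i j := G.adj_comm j i
    rw [if_congr hadj rfl rfl, hsymm j i]

lemma lap_rowsum (i : N) : ∑ j, weightedLap G B i j = 0 := by
  simp_rw [lap_apply_eq G B i]
  rw [Finset.sum_add_distrib]
  rw [Finset.sum_ite_eq Finset.univ i
    (fun _ => ∑ k, (if G.Adj i k then B i k else 0))]
  have h2 : ∑ j, (if G.Adj i j then -B i j else 0)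
      = -∑ j, (if G.Adj i j then B i j else 0) := by
    rw [← Finset.sum_neg_distrib]
    exact Finset.sum_congr rfl fun j _ => by split_ifs <;> simp
  rw [h2]
  simp

lemma adj_sum_comm (f : N → N → ℝ) :
    ∑ i, ∑ j, (if G.Adj i j then f i j else 0)
      = ∑ i, ∑ j, (if G.Adj i j then f j i else 0) := by
  rw [Finset.sum_comm]
  refine Finset.sum_congr rfl fun i _ => Finset.sum_congr rfl fun j _ => ?_
  have hadj : G.Adj j i ↔ G.Adj i j := G.adj_comm j i
  rw [if_congr hadj rfl rfl]

lemma lap_quad (hsymm : ∀ i j, B i j = B j i) (x : N → ℝ) :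
    (x ⬝ᵥ (weightedLap G B *ᵥ x)) + (x ⬝ᵥ (weightedLap G B *ᵥ x))
      = ∑ i, ∑ j, (if G.Adj i j then B i j * (x i - x j) ^ 2 else 0) := by
  have merge : ∀ f g : N → N → ℝ,
      ((∑ i, ∑ j, f i j) + ∑ i, ∑ j, g i j) = ∑ i, ∑ j, (f i j + g i j) := by
    intro f g
    rw [← Finset.sum_add_distrib]
    exact Finset.sum_congr rfl fun i _ => (Finset.sum_add_distrib).symm
  have e1 : x ⬝ᵥ (weightedLap G B *ᵥ x)
      = ∑ i, ∑ j, ((if G.Adj i j then B i j * (x i * x i) else 0)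
          + (if G.Adj i j then -(B i j * (x i * x j)) else 0)) := by
    have hterm : ∀ i j, x i * (weightedLap G B i j * x j)
        = (if i = j then x i * x i * (∑ k, (if G.Adj i k then B i k else 0)) else 0)
          + (if G.Adj i j then -(B i j * (x i * x j)) else 0) := by
      intro i j
      rw [lap_apply_eq]
      split_ifs with h1 h2
      · subst h1; exact absurd h2 (G.irrefl)
      · subst h1; ring
      · ring
      · ring
    have step : x ⬝ᵥ (weightedLap G B *ᵥ x)
        = ∑ i, ((∑ j, (if i = j then
              x i * x i * (∑ k, (if G.Adj i k then B i k else 0)) else 0))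
            + ∑ j, (if G.Adj i j then -(B i j * (x i * x j)) else 0)) := by
      simp only [dotProduct, mulVec]
      refine Finset.sum_congr rfl fun i _ => ?_
      rw [Finset.mul_sum, ← Finset.sum_add_distrib]
      exact Finset.sum_congr rfl fun j _ => hterm i j
    rw [step]
    refine Finset.sum_congr rfl fun i _ => ?_
    rw [Finset.sum_ite_eq Finset.univ i
      (fun _ => x i * x i * (∑ k, (if G.Adj i k then B i k else 0))), if_pos (Finset.mem_univ i)]
    have hc : x i * x i * (∑ k, (if G.Adj i k then B i k else 0))
        = ∑ j, (if G.Adj i j then B i j * (x i * x i) else 0) := by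
      rw [Finset.mul_sum]
      exact Finset.sum_congr rfl fun j _ => by split_ifs <;> ring
    rw [hc, ← Finset.sum_add_distrib]
  have hP : ∑ i, ∑ j, (if G.Adj i j then B i j * (x i * x i) else 0)
      = ∑ i, ∑ j, (if G.Adj i j then B i j * (x j * x j) else 0) := by
    rw [adj_sum_comm G (fun i j => B i j * (x i * x i))]
    refine Finset.sum_congr rfl fun i _ => Finset.sum_congr rfl fun j _ => ?_
    rw [hsymm j i]
  have e2 : x ⬝ᵥ (weightedLap G B *ᵥ x)
      = ∑ i, ∑ j, ((if G.Adj i j then B i j * (x j * x j) else 0)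
          + (if G.Adj i j then -(B i j * (x i * x j)) else 0)) := by
    rw [e1, ← merge (fun i j => if G.Adj i j then B i j * (x i * x i) else 0)
      (fun i j => if G.Adj i j then -(B i j * (x i * x j)) else 0), hP]
    exact merge _ _
  nth_rewrite 1 [e1]
  nth_rewrite 1 [e2]
  rw [merge]
  refine Finset.sum_congr rfl fun i _ => Finset.sum_congr rfl fun j _ => ?_
  split_ifs <;> ring

lemma lap_isHermitian (hsymm : ∀ i j, B i j = B j i) :
    (weightedLap G B).IsHermitian := by
  ext i j
  rw [Matrix.conjTranspose_apply, star_trivial]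
  exact lap_symm_apply G B hsymm i j

lemma lap_posSemidef (hsymm : ∀ i j, B i j = B j i)
    (hpos : ∀ i j, G.Adj i j → 0 < B i j) : (weightedLap G B).PosSemidef := by
  refine Matrix.PosSemidef.of_dotProduct_mulVec_nonneg (lap_isHermitian G B hsymm) fun x => ?_
  rw [star_trivial]
  have h := lap_quad G B hsymm x
  have hnn : 0 ≤ ∑ i, ∑ j, (if G.Adj i j then B i j * (x i - x j) ^ 2 else 0) := by
    refine Finset.sum_nonneg fun i _ => Finset.sum_nonneg fun j _ => ?_
    split_ifs with ha
    · exact mul_nonneg (hpos i j ha).le (sq_nonneg _)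
    · exact le_refl 0
  linarith

lemma lap_quad_zero_const (hsymm : ∀ i j, B i j = B j i)
    (hpos : ∀ i j, G.Adj i j → 0 < B i j) (hconn : G.Connected) (x : N → ℝ)
    (hq : x ⬝ᵥ (weightedLap G B *ᵥ x) = 0) : ∀ a b, x a = x b := by
  have h := lap_quad G B hsymm x
  rw [hq] at h
  have hnn : ∀ i ∈ Finset.univ (α := N), 0 ≤ ∑ j,
      (if G.Adj i j then B i j * (x i - x j) ^ 2 else 0) := by
    intro i _
    refine Finset.sum_nonneg fun j _ => ?_
    split_ifs with ha
    · exact mul_nonneg (hpos i j ha).le (sq_nonneg _)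
    · exact le_refl 0
  have hz : ∀ i ∈ Finset.univ (α := N), (∑ j,
      (if G.Adj i j then B i j * (x i - x j) ^ 2 else 0)) = 0 :=
    (Finset.sum_eq_zero_iff_of_nonneg hnn).mp (by linarith)
  have key : ∀ a b, G.Adj a b → x a = x b := by
    intro a b hab
    have hnn2 : ∀ j ∈ Finset.univ (α := N),
        0 ≤ (if G.Adj a j then B a j * (x a - x j) ^ 2 else 0) := by
      intro j _
      split_ifs with ha
      · exact mul_nonneg (hpos a j ha).le (sq_nonneg _)
      · exact le_refl 0
    have hz2 := (Finset.sum_eq_zero_iff_of_nonneg hnn2).mp (hz a (Finset.mem_univ a))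
      b (Finset.mem_univ b)
    rw [if_pos hab] at hz2
    have hB := hpos a b hab
    have : (x a - x b) ^ 2 = 0 := by
      by_contra hne
      have h2 : 0 < (x a - x b) ^ 2 := lt_of_le_of_ne (sq_nonneg _) (Ne.symm hne)
      nlinarith
    have := pow_eq_zero_iff (n := 2) (by norm_num) |>.mp this
    linarith [sub_eq_zero.mp this]
  intro a b
  have walkconst : ∀ {a b : N} (_ : G.Walk a b), x a = x b := by
    intro a b w
    induction w with
    | nil => rfl
    | cons h _ ih => exact (key _ _ h).trans ih
  exact walkconst (hconn.preconnected a b).some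

/-- Inverse of a positive definite matrix with nonpositive off-diagonal entries is
entrywise nonnegative. -/
lemma inv_nonneg_of_posdef_offdiag {m : Type*} [Fintype m] [DecidableEq m]
    {A : Matrix m m ℝ} (hA : A.PosDef) (hoff : ∀ i j, i ≠ j → A i j ≤ 0) :
    ∀ i j, 0 ≤ A⁻¹ i j := by
  intro i j
  have hdet : IsUnit A.det := isUnit_iff_ne_zero.mpr hA.det_pos.ne'
  set x : m → ℝ := A⁻¹ *ᵥ Pi.single j 1 with hx
  have hAx : A *ᵥ x = Pi.single j 1 := by
    rw [hx, Matrix.mulVec_mulVec, Matrix.mul_nonsing_inv _ hdet, Matrix.one_mulVec]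
  set z : m → ℝ := fun k => if x k < 0 then x k else 0 with hzdef
  have hz_nonpos : ∀ k, z k ≤ 0 := by
    intro k; dsimp [z]; split_ifs with h
    · exact h.le
    · exact le_refl 0
  have hxz : ∀ k, 0 ≤ x k - z k := by
    intro k; dsimp [z]; split_ifs with h
    · exact le_of_eq (sub_self (x k)).symm
    · rw [sub_zero]; exact not_lt.mp h
  have hzdiag : ∀ k, z k * (x k - z k) = 0 := by
    intro k; dsimp [z]; split_ifs <;> ring
  have hquad : z ⬝ᵥ (A *ᵥ z) ≤ 0 := by
    have expand : z ⬝ᵥ (A *ᵥ z)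
        = (∑ k, z k * ((A *ᵥ x) k)) - ∑ k, ∑ l, (A k l * z k) * (x l - z l) := by
      simp only [dotProduct, mulVec]
      rw [← Finset.sum_sub_distrib]
      refine Finset.sum_congr rfl fun k _ => ?_
      rw [Finset.mul_sum, Finset.mul_sum, ← Finset.sum_sub_distrib]
      exact Finset.sum_congr rfl fun l _ => by ring
    rw [expand, hAx]
    have h1 : ∑ k, z k * (Pi.single j 1 : m → ℝ) k ≤ 0 := by
      refine Finset.sum_nonpos fun k _ => ?_
      refine mul_nonpos_of_nonpos_of_nonneg (hz_nonpos k) ?_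
      rw [Pi.single_apply]
      split_ifs <;> norm_num
    have h2 : 0 ≤ ∑ k, ∑ l, (A k l * z k) * (x l - z l) := by
      refine Finset.sum_nonneg fun k _ => Finset.sum_nonneg fun l _ => ?_
      rcases eq_or_ne k l with rfl | hkl
      · have : (A k k * z k) * (x k - z k) = 0 := by
          rw [mul_assoc, hzdiag k, mul_zero]
        exact this.ge
      · exact mul_nonneg (mul_nonneg_of_nonpos_of_nonpos (hoff k l hkl) (hz_nonpos k)) (hxz l)
    linarith
  have hz0 : z = 0 := by
    by_contra hne
    have := hA.dotProduct_mulVec_pos hne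
    rw [star_trivial] at this
    linarith
  have hxnn : ∀ k, 0 ≤ x k := by
    intro k
    by_contra h
    push_neg at h
    have hk := congrFun hz0 k
    dsimp [z] at hk
    rw [if_pos h] at hk
    exact ne_of_lt h (by simpa using hk)
  have hAij : A⁻¹ i j = x i := by
    rw [hx]
    simp [Matrix.mulVec, dotProduct, Pi.single_apply]
  rw [hAij]
  exact hxnn i

end Aux

/-- Kron reduction: for a finite connected weighted graph with positive
edge weights, a nonempty proper vertex subset `Z` and `V = N ∖ Z`, the Schur complement
`L♯ = L_{(V,V)} − L_{(V,Z)} L_{(Z,Z)}⁻¹ L_{(Z,V)}` is the weighted Laplacian of a graph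
on `V` with nonnegative weights: it is symmetric positive semidefinite, has zero row
sums, and nonpositive off-diagonal entries. -/
theorem kron_reduction_is_laplacian {N : Type*} [Fintype N] [DecidableEq N]
    (G : SimpleGraph N) [DecidableRel G.Adj] (hconn : G.Connected)
    (B : N → N → ℝ) (hsymm : ∀ i j, B i j = B j i)
    (hpos : ∀ i j, G.Adj i j → 0 < B i j)
    (Z : Finset N) (hZne : Z.Nonempty) (hZproper : Z ≠ Finset.univ) :
    ∀ Lsharp : Matrix {x // x ∈ Zᶜ} {x // x ∈ Zᶜ} ℝ,
      Lsharp =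
        (weightedLap G B).submatrix
            (fun v : {x // x ∈ Zᶜ} => (v : N)) (fun v : {x // x ∈ Zᶜ} => (v : N))
        - (weightedLap G B).submatrix
            (fun v : {x // x ∈ Zᶜ} => (v : N)) (fun z : {x // x ∈ Z} => (z : N))
          * ((weightedLap G B).submatrix
            (fun z : {x // x ∈ Z} => (z : N)) (fun z : {x // x ∈ Z} => (z : N)))⁻¹
          * (weightedLap G B).submatrix
            (fun z : {x // x ∈ Z} => (z : N)) (fun v : {x // x ∈ Zᶜ} => (v : N)) →
      Lsharp.IsSymm ∧ Lsharp.PosSemidef ∧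
        (∀ i, ∑ j, Lsharp i j = 0) ∧ (∀ i j, i ≠ j → Lsharp i j ≤ 0) := by
  intro Lsharp hLs
  set L := weightedLap G B with hL
  set LVV := L.submatrix (fun v : {x // x ∈ Zᶜ} => (v : N)) (fun v : {x // x ∈ Zᶜ} => (v : N))
    with hLVV
  set LVZ := L.submatrix (fun v : {x // x ∈ Zᶜ} => (v : N)) (fun z : {x // x ∈ Z} => (z : N))
    with hLVZ
  set LZV := L.submatrix (fun z : {x // x ∈ Z} => (z : N)) (fun v : {x // x ∈ Zᶜ} => (v : N))
    with hLZV
  set LZZ := L.submatrix (fun z : {x // x ∈ Z} => (z : N)) (fun z : {x // x ∈ Z} => (z : N))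
    with hLZZ
  have hPSD : L.PosSemidef := lap_posSemidef G B hsymm hpos
  -- LZZ is positive definite
  have hZc : Zᶜ.Nonempty := Finset.nonempty_iff_ne_empty.mpr
    (fun h => hZproper ((Finset.compl_eq_empty_iff Z).mp h))
  obtain ⟨v0, hv0c⟩ := hZc
  have hv0 : v0 ∉ Z := Finset.mem_compl.mp hv0c
  have hPD : LZZ.PosDef := by
    refine Matrix.PosDef.of_dotProduct_mulVec_pos ((lap_isHermitian G B hsymm).submatrix _) fun x hx => ?_
    rw [star_trivial]
    set xt : N → ℝ := fun n => if h : n ∈ Z then x ⟨n, h⟩ else 0 with hxt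
    have hinner : ∀ n, (L *ᵥ xt) n = ∑ z' : {x // x ∈ Z}, L n ↑z' * x z' := by
      intro n
      show ∑ m, L n m * xt m = _
      have h1 : ∑ m ∈ Z, (L n m * xt m) = ∑ m, L n m * xt m :=
        Finset.sum_subset (Finset.subset_univ Z)
          (fun m _ hm => by dsimp only [xt]; rw [dif_neg hm, mul_zero])
      rw [← h1, ← Finset.sum_coe_sort Z (fun m => L n m * xt m)]
      refine Finset.sum_congr rfl fun z' _ => ?_
      dsimp only [xt]
      rw [dif_pos z'.2]
    have hquadeq : x ⬝ᵥ (LZZ *ᵥ x) = xt ⬝ᵥ (L *ᵥ xt) := by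
      simp only [dotProduct]
      have h1 : ∑ n ∈ Z, (xt n * (L *ᵥ xt) n) = ∑ n, xt n * (L *ᵥ xt) n :=
        Finset.sum_subset (Finset.subset_univ Z)
          (fun n _ hn => by dsimp only [xt]; rw [dif_neg hn, zero_mul])
      rw [← h1, ← Finset.sum_coe_sort Z (fun n => xt n * (L *ᵥ xt) n)]
      refine Finset.sum_congr rfl fun z _ => ?_
      rw [hinner]
      dsimp only [xt]
      rw [dif_pos z.2]
      congr 1
    have hge : 0 ≤ xt ⬝ᵥ (L *ᵥ xt) := by
      have := hPSD.dotProduct_mulVec_nonneg xt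
      rwa [star_trivial] at this
    rcases lt_or_eq_of_le hge with h | h
    · rw [hquadeq]; exact h
    · exfalso
      have hconst := lap_quad_zero_const G B hsymm hpos hconn xt h.symm
      have hxt0 : ∀ n, xt n = 0 := by
        intro n
        have := hconst n v0
        dsimp only [xt] at this ⊢
        rw [dif_neg hv0] at this
        exact this
      apply hx
      funext z
      have := hxt0 ↑z
      dsimp only [xt] at this
      rw [dif_pos z.2] at this
      exact this
  have hdetu : IsUnit LZZ.det := isUnit_iff_ne_zero.mpr hPD.det_pos.ne'
  haveI : Invertible LZZ := LZZ.invertibleOfIsUnitDet hdetu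
  -- positive semidefiniteness of the Schur complement
  have hZVeq : LZV = LVZᴴ := by
    ext z v
    rw [Matrix.conjTranspose_apply, star_trivial]
    exact lap_symm_apply G B hsymm ↑v ↑z
  have hblocks : L.submatrix
      (Sum.elim (fun v : {x // x ∈ Zᶜ} => (v : N)) (fun z : {x // x ∈ Z} => (z : N)))
      (Sum.elim (fun v : {x // x ∈ Zᶜ} => (v : N)) (fun z : {x // x ∈ Z} => (z : N)))
      = Matrix.fromBlocks LVV LVZ LZV LZZ := by
    ext i j
    rcases i with i | i <;> rcases j with j | j <;> rfl
  have hsubPSD : (Matrix.fromBlocks LVV LVZ LZV LZZ).PosSemidef :=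
    hblocks ▸ hPSD.submatrix _
  rw [hZVeq] at hsubPSD
  have hSchur : (LVV - LVZ * LZZ⁻¹ * LVZᴴ).PosSemidef :=
    (Matrix.PosDef.fromBlocks₂₂ LVV LVZ hPD).mp hsubPSD
  rw [← hZVeq] at hSchur
  have hPSDsharp : Lsharp.PosSemidef := by rw [hLs]; exact hSchur
  -- symmetry
  have hsym : Lsharp.IsSymm := by
    ext i j
    have h2 := congrFun (congrFun hPSDsharp.1 i) j
    rw [Matrix.conjTranspose_apply, star_trivial] at h2
    simpa [Matrix.transpose_apply] using h2
  -- row sums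
  have hZrow : LZZ *ᵥ (fun _ => (1:ℝ)) = -(LZV *ᵥ (fun _ => (1:ℝ))) := by
    funext z
    have h0 := lap_rowsum G B (z : N)
    have hsplit := Finset.sum_add_sum_compl Z (fun n => L (z : N) n)
    simp only [Matrix.mulVec, dotProduct, mul_one, Pi.neg_apply, hLZZ, hLZV,
      Matrix.submatrix_apply]
    rw [Finset.sum_coe_sort Z (fun n => L (z : N) n),
      Finset.sum_coe_sort Zᶜ (fun n => L (z : N) n)]
    linarith
  have hVrow : LVV *ᵥ (fun _ => (1:ℝ)) = -(LVZ *ᵥ (fun _ => (1:ℝ))) := by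
    funext v
    have h0 := lap_rowsum G B (v : N)
    have hsplit := Finset.sum_add_sum_compl Z (fun n => L (v : N) n)
    simp only [Matrix.mulVec, dotProduct, mul_one, Pi.neg_apply, hLVV, hLVZ,
      Matrix.submatrix_apply]
    rw [Finset.sum_coe_sort Zᶜ (fun n => L (v : N) n),
      Finset.sum_coe_sort Z (fun n => L (v : N) n)]
    linarith
  have hinv1 : LZZ⁻¹ *ᵥ (LZV *ᵥ (fun _ => (1:ℝ))) = -(fun _ => (1:ℝ)) := by
    have h1 : LZV *ᵥ (fun _ => (1:ℝ)) = -(LZZ *ᵥ (fun _ => (1:ℝ))) := by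
      rw [hZrow, neg_neg]
    rw [h1, Matrix.mulVec_neg, Matrix.mulVec_mulVec, Matrix.nonsing_inv_mul _ hdetu,
      Matrix.one_mulVec]
  have hrow : ∀ i, ∑ j, Lsharp i j = 0 := by
    have hv : Lsharp *ᵥ (fun _ => (1:ℝ)) = 0 := by
      rw [hLs, Matrix.sub_mulVec, ← Matrix.mulVec_mulVec, ← Matrix.mulVec_mulVec,
        hinv1, Matrix.mulVec_neg, hVrow]
      simp
    intro i
    have := congrFun hv i
    simpa [Matrix.mulVec, dotProduct] using this
  -- off-diagonal entries
  have hinvnn : ∀ a b, 0 ≤ LZZ⁻¹ a b := by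
    refine inv_nonneg_of_posdef_offdiag hPD fun a b hab => ?_
    exact lap_offdiag G B hpos (fun hc => hab (Subtype.ext hc))
  have hoffVZ : ∀ (a : {x // x ∈ Zᶜ}) (b : {x // x ∈ Z}), LVZ a b ≤ 0 := by
    intro a b
    refine lap_offdiag G B hpos fun hc => ?_
    have hc' : (a : N) = (b : N) := hc
    exact (Finset.mem_compl.mp a.2) (by rw [hc']; exact b.2)
  have hoffZV : ∀ (b : {x // x ∈ Z}) (a : {x // x ∈ Zᶜ}), LZV b a ≤ 0 := by
    intro b a
    refine lap_offdiag G B hpos fun hc => ?_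
    have hc' : (b : N) = (a : N) := hc
    exact (Finset.mem_compl.mp a.2) (by rw [← hc']; exact b.2)
  have hoff : ∀ i j, i ≠ j → Lsharp i j ≤ 0 := by
    intro i j hij
    rw [hLs, Matrix.sub_apply]
    have h1 : LVV i j ≤ 0 := lap_offdiag G B hpos (fun hc => hij (Subtype.ext hc))
    have h2 : 0 ≤ (LVZ * LZZ⁻¹ * LZV) i j := by
      rw [Matrix.mul_apply]
      refine Finset.sum_nonneg fun z' _ => ?_
      rw [Matrix.mul_apply, Finset.sum_mul]
      refine Finset.sum_nonneg fun z _ => ?_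
      have hh : LVZ i z * LZZ⁻¹ z z' ≤ 0 :=
        mul_nonpos_of_nonpos_of_nonneg (hoffVZ i z) (hinvnn z z')
      exact mul_nonneg_of_nonpos_of_nonpos hh (hoffZV z' j)
    linarith
  exact ⟨hsym, hPSDsharp, hrow, hoff⟩
end
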